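/- Let Q = B(½A⁻¹ - I)Bᵀ and δ = λ_max(Q). If α > max{δ, 0}, then the spectral radius of the REHSS iteration matrix Γ = P⁻¹(P - 𝒜) is strictly less than 1, where P = [[A, ABᵀ], [-B, αI]] and 𝒜 = [[A, Bᵀ], [-B, 0]]. -/

import Mathlib

open Matrix

open ComplexOrder

private lemma map_mul_ofReal {k l o : Type*} [Fintype l]
    (M : Matrix k l ℝ) (N : Matrix l o ℝ) :
    (M * N).map Complex.ofReal = M.map Complex.ofReal * N.map Complex.ofReal :=
  Matrix.map_mul (f := Complex.ofRealHom)

private lemma conjT_map_ofReal {k l : Type*} (M : Matrix k l ℝ) :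
    (M.map Complex.ofReal)ᴴ = Mᵀ.map Complex.ofReal := by
  ext i j
  simp [Matrix.conjTranspose_apply, Complex.conj_ofReal]

private lemma psd_map_ofReal {k : Type*} [Fintype k] {M : Matrix k k ℝ}
    (h : M.PosSemidef) : (M.map Complex.ofReal).PosSemidef := by
  obtain ⟨L, hL⟩ : ∃ L : Matrix k k ℝ, M = Lᵀ * L := by
    classical
    open MatrixOrder in
    obtain ⟨X, hX, -, hXX⟩ := CFC.exists_sqrt_of_isSelfAdjoint_of_quasispectrumRestricts
      h.isHermitian (QuasispectrumRestricts.nnreal_of_nonneg (Matrix.nonneg_iff_posSemidef.mpr h))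
    have hXt : Xᵀ = X := by rw [← Matrix.conjTranspose_eq_transpose_of_trivial]; exact hX
    exact ⟨X, by rw [hXt, hXX]⟩
  have h2 : M.map Complex.ofReal
      = (L.map Complex.ofReal)ᴴ * (L.map Complex.ofReal) := by
    rw [hL, map_mul_ofReal, conjT_map_ofReal]
  rw [h2]
  exact Matrix.posSemidef_conjTranspose_mul_self _

private lemma mulVec_eq_zero_of_isUnit {k : Type*} [Fintype k] [DecidableEq k]
    (M : Matrix k k ℂ) (h : IsUnit M.det) {z : k → ℂ} (hz : M *ᵥ z = 0) : z = 0 := by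
  have h2 := congrArg (fun w => M⁻¹ *ᵥ w) hz
  simpa [Matrix.mulVec_mulVec, Matrix.nonsing_inv_mul _ h] using h2

private lemma cx_nonneg {z : ℂ} (h : 0 ≤ z) : z = (z.re : ℂ) ∧ 0 ≤ z.re := by
  rw [Complex.nonneg_iff] at h
  refine ⟨?_, h.1⟩
  rw [← Complex.re_add_im z, ← h.2]
  simp

private lemma dot_conj {R : Type*} [CommSemiring R] [StarRing R] {k l : Type*} [Fintype k] [Fintype l]
    (M : Matrix k l R) (C : Matrix k k R) (y : l → R) :
    star y ⬝ᵥ ((Mᴴ * C * M) *ᵥ y) = star (M *ᵥ y) ⬝ᵥ (C *ᵥ (M *ᵥ y)) := by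
  simp only [← Matrix.mulVec_mulVec, Matrix.star_mulVec, Matrix.dotProduct_mulVec]

private lemma transpose_mulVec_eq_zero {m n : ℕ} (B : Matrix (Fin m) (Fin n) ℝ)
    (hB : B.rank = m) {x : Fin m → ℝ} (hx : Bᵀ *ᵥ x = 0) : x = 0 := by
  have h1 : Bᵀ.rank = m := by rw [Matrix.rank_transpose, hB]
  have h2 := LinearMap.finrank_range_add_finrank_ker (Bᵀ.mulVecLin)
  rw [show Module.finrank ℝ (LinearMap.range Bᵀ.mulVecLin) = Bᵀ.rank from rfl, h1] at h2
  have h3 : Module.finrank ℝ (LinearMap.ker Bᵀ.mulVecLin) = 0 := by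
    have h4 : Module.finrank ℝ (Fin m → ℝ) = m := Module.finrank_fin_fun ℝ
    omega
  have h4 : LinearMap.ker Bᵀ.mulVecLin = ⊥ := Submodule.finrank_eq_zero.mp h3
  have h5 : x ∈ LinearMap.ker Bᵀ.mulVecLin := by
    rw [LinearMap.mem_ker, Matrix.mulVecLin_apply, hx]
  rw [h4] at h5
  simpa using h5

set_option maxHeartbeats 1000000 in
/-- Let `Q = B(½A⁻¹ - I)Bᵀ` and `δ = λ_max(Q)`. If `α > max {δ, 0}`, then the
spectral radius of the REHSS iteration matrix `Γ = P⁻¹(P - 𝒜)` is strictly less than `1`,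
i.e. every complex eigenvalue of `Γ` has modulus `< 1`. -/
theorem REHSS_iteration_convergence (n m : ℕ)
    (A : Matrix (Fin n) (Fin n) ℝ) (B : Matrix (Fin m) (Fin n) ℝ)
    (hA : A.PosDef) (hB : B.rank = m) (hmn : m < n) (α : ℝ)
    (Q : Matrix (Fin m) (Fin m) ℝ)
    (hQ : Q = B * ((2 : ℝ)⁻¹ • A⁻¹ - 1) * Bᵀ)
    (hQh : Q.IsHermitian)
    (δ : ℝ) (hδ : δ = ⨆ i, hQh.eigenvalues i)
    (hα : α > max δ 0)
    (P 𝒜 Γ : Matrix (Fin n ⊕ Fin m) (Fin n ⊕ Fin m) ℝ)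
    (hP : P = Matrix.fromBlocks A (A * Bᵀ) (-B) (α • (1 : Matrix (Fin m) (Fin m) ℝ)))
    (h𝒜 : 𝒜 = Matrix.fromBlocks A Bᵀ (-B) (0 : Matrix (Fin m) (Fin m) ℝ))
    (hΓ : Γ = P⁻¹ * (P - 𝒜)) :
    ∀ (μ : ℂ) (v : Fin n ⊕ Fin m → ℂ), v ≠ 0 →
      (Γ.map (Complex.ofReal)).mulVec v = μ • v → ‖μ‖ < 1 := by
  intro μ v hv hev
  by_cases hμ0 : μ = 0
  · simp [hμ0]
  have hα0 : (0:ℝ) < α := (le_max_right δ 0).trans_lt hα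
  have hαδ : δ < α := (le_max_left δ 0).trans_lt hα
  -- real facts
  have hAdet : IsUnit A.det := isUnit_iff_ne_zero.mpr hA.det_pos.ne'
  have hAinv : (A⁻¹).PosDef := hA.inv
  have hAinvdet : IsUnit (A⁻¹).det := isUnit_iff_ne_zero.mpr hAinv.det_pos.ne'
  -- B * Bᵀ is positive definite
  have hBBt : (B * Bᵀ).PosDef := by
    have hherm : (B * Bᵀ).IsHermitian := by
      have := Matrix.isHermitian_mul_conjTranspose_self B
      simpa using this
    refine Matrix.PosDef.of_dotProduct_mulVec_pos hherm (fun z hz => ?_)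
    have hBtz : Bᵀ *ᵥ z ≠ 0 := fun h => hz (transpose_mulVec_eq_zero B hB h)
    have hcalc : star z ⬝ᵥ ((B * Bᵀ) *ᵥ z)
        = star (Bᵀ *ᵥ z) ⬝ᵥ (Bᵀ *ᵥ z) := by
      have h1 : B * Bᵀ = Bᵀᴴ * (1 : Matrix (Fin n) (Fin n) ℝ) * Bᵀ := by
        simp
      rw [h1, dot_conj, Matrix.one_mulVec]
    rw [hcalc]
    rcases lt_or_eq_of_le (dotProduct_star_self_nonneg (Bᵀ *ᵥ z)) with h | h
    · exact h
    · exact absurd (dotProduct_star_self_eq_zero.mp h.symm) hBtz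
  -- P is invertible
  have hS1 : (α • (1 : Matrix (Fin m) (Fin m) ℝ) + B * Bᵀ).PosDef := by
    have h1 : (α • (1 : Matrix (Fin m) (Fin m) ℝ)).PosDef := by
      rw [Matrix.smul_one_eq_diagonal]
      exact Matrix.PosDef.diagonal (fun _ => hα0)
    exact h1.add_posSemidef hBBt.posSemidef
  have hPdet : IsUnit P.det := by
    have hinvA : Invertible A := A.invertibleOfIsUnitDet hAdet
    rw [hP, Matrix.det_fromBlocks₁₁]
    have hschur : α • (1 : Matrix (Fin m) (Fin m) ℝ) - (-B) * ⅟A * (A * Bᵀ)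
        = α • 1 + B * Bᵀ := by
      rw [Matrix.invOf_eq_nonsing_inv]
      have h2 : (-B) * A⁻¹ * (A * Bᵀ) = -(B * Bᵀ) := by
        rw [Matrix.neg_mul, Matrix.neg_mul, Matrix.mul_assoc, ← Matrix.mul_assoc A⁻¹,
          Matrix.nonsing_inv_mul _ hAdet, Matrix.one_mul]
      rw [h2, sub_neg_eq_add]
    rw [hschur]
    exact isUnit_iff_ne_zero.mpr (mul_pos hA.det_pos hS1.det_pos).ne'
  have hPΓ : P * Γ = P - 𝒜 := by
    rw [hΓ, ← Matrix.mul_assoc, Matrix.mul_nonsing_inv _ hPdet, Matrix.one_mul]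
  have hev2 : ((P - 𝒜).map Complex.ofReal) *ᵥ v = μ • ((P.map Complex.ofReal) *ᵥ v) := by
    rw [← hPΓ, map_mul_ofReal, ← Matrix.mulVec_mulVec, hev, Matrix.mulVec_smul]
  -- block decomposition
  set x : Fin n → ℂ := fun i => v (Sum.inl i) with hxdef
  set y : Fin m → ℂ := fun i => v (Sum.inr i) with hydef
  have hveq : v = Sum.elim x y := by funext i; cases i <;> rfl
  set Ac : Matrix (Fin n) (Fin n) ℂ := A.map Complex.ofReal with hAcdef
  set Bc : Matrix (Fin m) (Fin n) ℂ := B.map Complex.ofReal with hBcdef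
  set Btc : Matrix (Fin n) (Fin m) ℂ := Bᵀ.map Complex.ofReal with hBtcdef
  set Nc : Matrix (Fin n) (Fin n) ℂ := A⁻¹.map Complex.ofReal with hNcdef
  have hABt : (A * Bᵀ).map Complex.ofReal = Ac * Btc := map_mul_ofReal A Bᵀ
  have hnB : (-B).map Complex.ofReal = -Bc := by ext i j; simp [hBcdef]
  have hα1 : (α • (1 : Matrix (Fin m) (Fin m) ℝ)).map Complex.ofReal
      = (α : ℂ) • (1 : Matrix (Fin m) (Fin m) ℂ) := by
    ext i j
    by_cases h : i = j <;> simp [Matrix.one_apply, h]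
  have h01 : ((0 : Matrix (Fin m) (Fin m) ℝ)).map Complex.ofReal = 0 := by
    ext i j; simp
  have hPc : P.map Complex.ofReal
      = Matrix.fromBlocks Ac (Ac * Btc) (-Bc) ((α : ℂ) • 1) := by
    rw [hP, Matrix.fromBlocks_map, hABt, hnB, hα1]
  have h𝒜c : 𝒜.map Complex.ofReal = Matrix.fromBlocks Ac Btc (-Bc) 0 := by
    rw [h𝒜, Matrix.fromBlocks_map, hnB, h01]
  have hsub : (P - 𝒜).map Complex.ofReal
      = P.map Complex.ofReal - 𝒜.map Complex.ofReal := by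
    ext i j; simp
  rw [hsub, Matrix.sub_mulVec, hPc, h𝒜c, hveq, Matrix.fromBlocks_mulVec,
    Matrix.fromBlocks_mulVec] at hev2
  have eq1v : (Ac * Btc) *ᵥ y - Btc *ᵥ y = μ • (Ac *ᵥ x + (Ac * Btc) *ᵥ y) := by
    funext i
    have h := congrFun hev2 (Sum.inl i)
    simp only [Sum.elim_comp_inl, Sum.elim_comp_inr, Sum.elim_inl, Pi.sub_apply,
      Pi.add_apply, Pi.smul_apply, smul_eq_mul] at h ⊢
    linear_combination h
  have eq2v : (α : ℂ) • y = μ • (-(Bc *ᵥ x) + (α : ℂ) • y) := by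
    funext i
    have h := congrFun hev2 (Sum.inr i)
    simp only [Sum.elim_comp_inl, Sum.elim_comp_inr, Sum.elim_inr, Pi.sub_apply,
      Pi.add_apply, Pi.smul_apply, smul_eq_mul,
      Matrix.zero_mulVec, Pi.zero_apply, Matrix.neg_mulVec, Pi.neg_apply,
      Matrix.smul_mulVec, Matrix.one_mulVec] at h ⊢
    linear_combination h
  -- Ac is invertible over ℂ
  have hAcdet : IsUnit Ac.det := by
    have h1 : Ac.det = (A.det : ℂ) := (RingHom.map_det Complex.ofRealHom A).symm
    rw [h1]
    exact isUnit_iff_ne_zero.mpr (Complex.ofReal_ne_zero.mpr hA.det_pos.ne')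
  -- y ≠ 0
  have hy0 : y ≠ 0 := by
    intro h0
    have hAx : Ac *ᵥ x = 0 := by
      have h := eq1v
      rw [h0, Matrix.mulVec_zero, Matrix.mulVec_zero, sub_zero, add_zero] at h
      have h2 : μ • (Ac *ᵥ x) = 0 := h.symm ▸ rfl
      rcases smul_eq_zero.mp h2 with h3 | h3
      · exact absurd h3 hμ0
      · exact h3
    have hx0 : x = 0 := mulVec_eq_zero_of_isUnit Ac hAcdet hAx
    apply hv
    rw [hveq, hx0, h0]
    funext i; cases i <;> rfl
  -- key reduced equation
  have hNcAc : Nc * Ac = 1 := by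
    rw [hNcdef, hAcdef, ← map_mul_ofReal, Matrix.nonsing_inv_mul _ hAdet]
    ext i j
    by_cases h : i = j <;> simp [Matrix.one_apply, h]
  set Sc : Matrix (Fin m) (Fin m) ℂ := Bc * Btc with hScdef
  set Rc : Matrix (Fin m) (Fin m) ℂ := Bc * Nc * Btc with hRcdef
  have hBN1 : Bc * Nc * (Ac * Btc) = Sc := by
    rw [Matrix.mul_assoc Bc Nc, ← Matrix.mul_assoc Nc, hNcAc, Matrix.one_mul, hScdef]
  have hBN2 : Bc * Nc * Ac = Bc := by
    rw [Matrix.mul_assoc, hNcAc, Matrix.mul_one]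
  have eq1'' : Sc *ᵥ y - Rc *ᵥ y = μ • (Bc *ᵥ x + Sc *ᵥ y) := by
    have h := congrArg (fun w => (Bc * Nc) *ᵥ w) eq1v
    simp only [Matrix.mulVec_smul, Matrix.mulVec_sub, Matrix.mulVec_add,
      Matrix.mulVec_mulVec] at h
    rwa [hBN1, hBN2] at h
  have keyvec : (α : ℂ) • y + Sc *ᵥ y - Rc *ᵥ y = μ • ((α : ℂ) • y + Sc *ᵥ y) := by
    funext i
    have h1 := congrFun eq1'' i
    have h2 := congrFun eq2v i
    simp only [Pi.sub_apply, Pi.add_apply, Pi.smul_apply, Pi.neg_apply, smul_eq_mul] at h1 h2 ⊢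
    linear_combination h1 + h2
  -- scalar equation
  set N : ℂ := star y ⬝ᵥ y with hNdef
  set s : ℂ := star y ⬝ᵥ (Sc *ᵥ y) with hsdef
  set r : ℂ := star y ⬝ᵥ (Rc *ᵥ y) with hrdef
  have keyscalar : (α : ℂ) * N + s - r = μ * ((α : ℂ) * N + s) := by
    have h := congrArg (fun w => star y ⬝ᵥ w) keyvec
    simpa only [dotProduct_sub, dotProduct_add, dotProduct_smul,
      smul_eq_mul] using h
  -- positivity facts
  have hBtcH : Btcᴴ = Bc := by
    rw [hBtcdef, conjT_map_ofReal, Matrix.transpose_transpose, hBcdef]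
  have hScPSD : Sc.PosSemidef := by
    rw [hScdef, ← hBtcH]
    exact Matrix.posSemidef_conjTranspose_mul_self Btc
  have hs_nonneg : (0 : ℂ) ≤ s := hScPSD.dotProduct_mulVec_nonneg y
  have hScdet : IsUnit Sc.det := by
    have h1 : Sc = (B * Bᵀ).map Complex.ofReal := (map_mul_ofReal B Bᵀ).symm
    have h2 : ((B * Bᵀ).map Complex.ofReal).det = ((B * Bᵀ).det : ℂ) :=
      (RingHom.map_det Complex.ofRealHom _).symm
    rw [h1, h2]
    exact isUnit_iff_ne_zero.mpr (Complex.ofReal_ne_zero.mpr hBBt.det_pos.ne')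
  have hw : Btc *ᵥ y ≠ 0 := by
    intro h
    apply hy0
    apply mulVec_eq_zero_of_isUnit Sc hScdet
    rw [hScdef, ← Matrix.mulVec_mulVec, h, Matrix.mulVec_zero]
  have hNcPSD : Nc.PosSemidef := by
    rw [hNcdef]; exact psd_map_ofReal hAinv.posSemidef
  have hNcdet : IsUnit Nc.det := by
    have h2 : Nc.det = ((A⁻¹).det : ℂ) := by
      rw [hNcdef]; exact (RingHom.map_det Complex.ofRealHom _).symm
    rw [h2]
    exact isUnit_iff_ne_zero.mpr (Complex.ofReal_ne_zero.mpr hAinv.det_pos.ne')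
  have hr' : r = star (Btc *ᵥ y) ⬝ᵥ (Nc *ᵥ (Btc *ᵥ y)) := by
    rw [hrdef, hRcdef, ← hBtcH, dot_conj]
  have hrpos : (0 : ℂ) < r := by
    rcases lt_or_eq_of_le (hNcPSD.dotProduct_mulVec_nonneg (Btc *ᵥ y)) with h | h
    · rw [hr']; exact h
    · exfalso
      have h2 : Nc *ᵥ (Btc *ᵥ y) = 0 :=
        (hNcPSD.dotProduct_mulVec_zero_iff (Btc *ᵥ y)).mp h.symm
      exact hw (mulVec_eq_zero_of_isUnit Nc hNcdet h2)
  have hN_nonneg : (0 : ℂ) ≤ N := dotProduct_star_self_nonneg y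
  have hNne : N ≠ 0 := fun h => hy0 (dotProduct_star_self_eq_zero.mp h)
  -- the eigenvalue bound: δ • 1 - Q is positive semidefinite
  have heig : ∀ i, hQh.eigenvalues i ≤ δ := fun i =>
    hδ ▸ le_ciSup (Set.Finite.bddAbove (Set.finite_range _)) i
  have hδQ : (δ • (1 : Matrix (Fin m) (Fin m) ℝ) - Q).PosSemidef := by
    have hdg : (Matrix.diagonal (fun i => δ - hQh.eigenvalues i)).PosSemidef :=
      Matrix.PosSemidef.diagonal (fun i => sub_nonneg.mpr (heig i))
    have hUU : (hQh.eigenvectorUnitary : Matrix (Fin m) (Fin m) ℝ)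
        * ((hQh.eigenvectorUnitary : Matrix (Fin m) (Fin m) ℝ))ᴴ = 1 := by
      have h := (Matrix.mem_unitaryGroup_iff).mp hQh.eigenvectorUnitary.2
      simpa [Matrix.star_eq_conjTranspose] using h
    have hdecomp : δ • (1 : Matrix (Fin m) (Fin m) ℝ) - Q
        = (hQh.eigenvectorUnitary : Matrix (Fin m) (Fin m) ℝ)
          * Matrix.diagonal (fun i => δ - hQh.eigenvalues i)
          * ((hQh.eigenvectorUnitary : Matrix (Fin m) (Fin m) ℝ))ᴴ := by
      have hd2 : Matrix.diagonal (fun i => δ - hQh.eigenvalues i)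
          = δ • (1 : Matrix (Fin m) (Fin m) ℝ) - Matrix.diagonal hQh.eigenvalues := by
        rw [Matrix.smul_one_eq_diagonal, Matrix.diagonal_sub]
      have hsp := hQh.spectral_theorem
      rw [RCLike.ofReal_real_eq_id, Function.id_comp, Unitary.conjStarAlgAut_apply] at hsp
      have e1 : (hQh.eigenvectorUnitary : Matrix (Fin m) (Fin m) ℝ)
          * (δ • (1 : Matrix (Fin m) (Fin m) ℝ))
          * ((hQh.eigenvectorUnitary : Matrix (Fin m) (Fin m) ℝ))ᴴ = δ • 1 := by
        rw [Matrix.mul_smul, Matrix.smul_mul, Matrix.mul_one, hUU]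
      rw [hd2, Matrix.mul_sub, Matrix.sub_mul, e1, ← Matrix.star_eq_conjTranspose, ← hsp]
    rw [hdecomp]
    exact hdg.mul_mul_conjTranspose_same _
  -- the quadratic form of Q
  set Qc : Matrix (Fin m) (Fin m) ℂ := Q.map Complex.ofReal with hQcdef
  have hQR : Q = (2:ℝ)⁻¹ • (B * A⁻¹ * Bᵀ) - B * Bᵀ := by
    rw [hQ, Matrix.mul_sub, Matrix.mul_smul, Matrix.mul_one, Matrix.sub_mul, Matrix.smul_mul]
  have hRmap : (B * A⁻¹ * Bᵀ).map Complex.ofReal = Rc := by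
    rw [map_mul_ofReal, map_mul_ofReal, hRcdef, hBcdef, hNcdef, hBtcdef]
  have hQcRS : Qc = (2:ℂ)⁻¹ • Rc - Sc := by
    calc Qc = ((2:ℝ)⁻¹ • (B * A⁻¹ * Bᵀ) - B * Bᵀ).map Complex.ofReal := by
          rw [hQcdef, hQR]
      _ = (2:ℂ)⁻¹ • (B * A⁻¹ * Bᵀ).map Complex.ofReal
          - (B * Bᵀ).map Complex.ofReal := by
          ext i j
          simp only [Matrix.map_apply, Matrix.sub_apply, Matrix.smul_apply, smul_eq_mul]
          push_cast
          ring
      _ = (2:ℂ)⁻¹ • Rc - Sc := by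
          rw [hRmap, map_mul_ofReal, hScdef, hBcdef, hBtcdef]
  have hδQc : ((δ : ℂ) • (1 : Matrix (Fin m) (Fin m) ℂ) - Qc).PosSemidef := by
    have h1 := psd_map_ofReal hδQ
    have h2 : (δ • (1 : Matrix (Fin m) (Fin m) ℝ) - Q).map Complex.ofReal
        = (δ : ℂ) • 1 - Qc := by
      ext i j
      by_cases h : i = j <;> simp [Matrix.one_apply, h, hQcdef]
    rwa [h2] at h1
  have hqbound : (0:ℂ) ≤ (δ:ℂ) * N - ((2:ℂ)⁻¹ * r - s) := by
    have h1 := hδQc.dotProduct_mulVec_nonneg y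
    rw [Matrix.sub_mulVec, Matrix.smul_mulVec, Matrix.one_mulVec,
      dotProduct_sub, dotProduct_smul, smul_eq_mul] at h1
    have h2 : star y ⬝ᵥ (Qc *ᵥ y) = (2:ℂ)⁻¹ * r - s := by
      rw [hQcRS, Matrix.sub_mulVec, Matrix.smul_mulVec, dotProduct_sub,
        dotProduct_smul, smul_eq_mul, hrdef, hsdef]
    rwa [h2] at h1
  -- final arithmetic
  obtain ⟨hNeq, hNre⟩ := cx_nonneg hN_nonneg
  obtain ⟨hseq, hsre⟩ := cx_nonneg hs_nonneg
  obtain ⟨hreq, _⟩ := cx_nonneg (le_of_lt hrpos)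
  have hNpos : 0 < N.re := lt_of_le_of_ne hNre (fun h => hNne (by rw [hNeq, ← h]; simp))
  have hrpos' : 0 < r.re := (Complex.pos_iff.mp hrpos).1
  have hqb' : (2:ℝ)⁻¹ * r.re - s.re ≤ δ * N.re := by
    have h := hqbound
    rw [hNeq, hreq, hseq] at h
    have h2 : (δ:ℂ) * (N.re:ℂ) - ((2:ℂ)⁻¹ * (r.re:ℂ) - (s.re:ℂ))
        = ((δ * N.re - (2⁻¹ * r.re - s.re) : ℝ) : ℂ) := by push_cast; ring
    rw [h2] at h
    have h3 := (Complex.le_def.mp h).1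
    simp only [Complex.zero_re, Complex.ofReal_re] at h3
    linarith
  have hkey2 : ((α * N.re + s.re - r.re : ℝ) : ℂ) = μ * ((α * N.re + s.re : ℝ) : ℂ) := by
    rw [hNeq, hseq, hreq] at keyscalar
    push_cast
    linear_combination keyscalar
  have hden : (0:ℝ) < α * N.re + s.re := by nlinarith
  have hμeq : μ = ((α * N.re + s.re - r.re) / (α * N.re + s.re) : ℝ) := by
    have hne : ((α * N.re + s.re : ℝ) : ℂ) ≠ 0 := Complex.ofReal_ne_zero.mpr hden.ne'
    rw [Complex.ofReal_div, eq_div_iff hne]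
    exact hkey2.symm
  rw [hμeq, Complex.norm_real, Real.norm_eq_abs, abs_div, abs_of_pos hden, div_lt_one hden, abs_lt]
  constructor
  · nlinarith [mul_lt_mul_of_pos_right hαδ hNpos]
  · linarith
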